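/- In a dagger category, if f∂ : B ⟶ A is a †-Drazin inverse of f : A ⟶ B, then (f∂)† ≫ f∂ : A ⟶ A is a Drazin inverse of f ≫ f†, and f∂ ≫ (f∂)† : B ⟶ B is a Drazin inverse of f† ≫ f. -/

import Mathlib

open CategoryTheory

universe v u

/-- A dagger on a category: an identity-on-objects contravariant involution. -/
structure Dagger (C : Type u) [Category.{v} C] where
  dag : ∀ {X Y : C}, (X ⟶ Y) → (Y ⟶ X)
  dag_id : ∀ X : C, dag (𝟙 X) = 𝟙 X
  dag_comp : ∀ {X Y Z : C} (f : X ⟶ Y) (g : Y ⟶ Z), dag (f ≫ g) = dag g ≫ dag f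
  dag_dag : ∀ {X Y : C} (f : X ⟶ Y), dag (dag f) = f

/-- Iterated composition power of an endomorphism, with `cpow x 0 = 𝟙 A`. -/
def cpow {C : Type u} [Category.{v} C] {A : C} (x : A ⟶ A) : ℕ → (A ⟶ A)
  | 0 => 𝟙 A
  | n + 1 => cpow x n ≫ x

/-- `p` is a †-Drazin inverse of `f`. -/
def IsDagDrazinInv {C : Type u} [Category.{v} C] (D : Dagger C)
    {A B : C} (f : A ⟶ B) (p : B ⟶ A) : Prop :=
  (∃ k : ℕ, cpow (f ≫ D.dag f) k ≫ f ≫ p = cpow (f ≫ D.dag f) k ∧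
    p ≫ f ≫ cpow (D.dag f ≫ f) k = cpow (D.dag f ≫ f) k) ∧
  p ≫ f ≫ p = p ∧
  D.dag (f ≫ p) = f ≫ p ∧
  D.dag (p ≫ f) = p ≫ f

/-- `d` is a Drazin inverse of the endomorphism `x`. -/
def IsDrazinInv {C : Type u} [Category.{v} C] {A : C} (x d : A ⟶ A) : Prop :=
  (∃ k : ℕ, cpow x (k + 1) ≫ d = cpow x k) ∧
  d ≫ x ≫ d = d ∧
  x ≫ d = d ≫ x

/- Since `f ≫ p` and `p ≫ f` are self-adjoint, `f† ≫ p† = p ≫ f`, so `x = f ≫ f†` and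
`d = p† ≫ p` satisfy `x ≫ d = f ≫ p`. Everything then follows from `p ≫ f ≫ p = p`; the
commutation comes for free because `d ≫ x = (x ≫ d)†`. The second half is the first one applied
to `f†`, of which `p†` is again a †-Drazin inverse. -/

lemma cpow_succ' {C : Type u} [Category.{v} C] {A : C} (x : A ⟶ A) (n : ℕ) :
    cpow x (n + 1) = x ≫ cpow x n := by
  induction n with
  | zero => simp only [cpow, Category.id_comp, Category.comp_id]
  | succ n ih =>
    show cpow x (n + 1) ≫ x = x ≫ cpow x n ≫ x
    rw [ih, Category.assoc]

namespace Dagger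

variable {C : Type u} [Category.{v} C] (D : Dagger C)

lemma dag_cpow {A : C} (x : A ⟶ A) (n : ℕ) : D.dag (cpow x n) = cpow (D.dag x) n := by
  induction n with
  | zero => exact D.dag_id A
  | succ n ih => rw [cpow, D.dag_comp, ih, ← cpow_succ']

lemma dag_comp_dag_self {A B : C} (f : A ⟶ B) : D.dag (f ≫ D.dag f) = f ≫ D.dag f := by
  rw [D.dag_comp, D.dag_dag]

lemma comp_comm_of_dag_eq {A : C} {x d : A ⟶ A} (hx : D.dag x = x) (hd : D.dag d = d)
    (hxd : D.dag (x ≫ d) = x ≫ d) : x ≫ d = d ≫ x := by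
  rw [← hxd, D.dag_comp, hx, hd]

end Dagger

namespace IsDagDrazinInv

variable {C : Type u} [Category.{v} C] {D : Dagger C} {A B : C} {f : A ⟶ B} {p : B ⟶ A}

lemma dag_comp_dag_assoc (h : IsDagDrazinInv D f p) {Z : C} (g : B ⟶ Z) :
    D.dag f ≫ D.dag p ≫ g = p ≫ f ≫ g := by
  rw [← Category.assoc, ← D.dag_comp, h.2.2.2, Category.assoc]

lemma dag (h : IsDagDrazinInv D f p) : IsDagDrazinInv D (D.dag f) (D.dag p) := by
  obtain ⟨⟨k, hk₁, hk₂⟩, hpfp, hfp, hpf⟩ := h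
  refine ⟨⟨k, ?_, ?_⟩, ?_, ?_, ?_⟩
  · simpa only [D.dag_comp, D.dag_cpow, D.dag_dag, Category.assoc] using congrArg D.dag hk₂
  · simpa only [D.dag_comp, D.dag_cpow, D.dag_dag, Category.assoc] using congrArg D.dag hk₁
  · simpa only [D.dag_comp, Category.assoc] using congrArg D.dag hpfp
  · rw [← D.dag_comp, D.dag_dag, hpf]
  · rw [← D.dag_comp, D.dag_dag, hfp]

lemma isDrazinInv_comp_dag (h : IsDagDrazinInv D f p) :
    IsDrazinInv (f ≫ D.dag f) (D.dag p ≫ p) := by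
  have hcancel : f ≫ D.dag f ≫ D.dag p ≫ p = f ≫ p := by
    rw [h.dag_comp_dag_assoc, h.2.1]
  obtain ⟨⟨k, hk, -⟩, hpfp, hfp, -⟩ := h
  refine ⟨⟨k, ?_⟩, ?_, ?_⟩
  · rw [cpow, Category.assoc, Category.assoc, hcancel, hk]
  · calc (D.dag p ≫ p) ≫ (f ≫ D.dag f) ≫ D.dag p ≫ p
        = D.dag p ≫ p ≫ f ≫ D.dag f ≫ D.dag p ≫ p := by simp only [Category.assoc]
      _ = D.dag p ≫ p := by rw [hcancel, hpfp]
  · refine D.comp_comm_of_dag_eq (D.dag_comp_dag_self f) (by rw [D.dag_comp, D.dag_dag]) ?_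
    rw [Category.assoc, hcancel, hfp]

end IsDagDrazinInv

/-- If `p` is the †-Drazin inverse of `f`, then `p† ≫ p` is a Drazin inverse of `f ≫ f†`
and `p ≫ p†` is a Drazin inverse of `f† ≫ f`. -/
theorem drazinInv_of_dagDrazinInv {C : Type u} [Category.{v} C] (D : Dagger C)
    {A B : C} (f : A ⟶ B) (p : B ⟶ A) (h : IsDagDrazinInv D f p) :
    IsDrazinInv (f ≫ D.dag f) (D.dag p ≫ p) ∧
    IsDrazinInv (D.dag f ≫ f) (p ≫ D.dag p) := by
  simpa only [D.dag_dag] using And.intro h.isDrazinInv_comp_dag h.dag.isDrazinInv_comp_dag
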